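/- For all integers j, k with 0 ≤ j < k ≤ d, the intersection point v = ( jk/(2d+1), (2d+1−j)(2d+1−k)/(2d+1) ) of the lines {R_j(x,y,1)=0} and {R_k(x,y,1)=0} satisfies p(v) = 0, ∂p/∂x(v) = 0, ∂p/∂y(v) = 0, and q(v) ≠ 0; hence v is a critical point of F = P/Q with critical value 0 (a type 1 point of F, a saddle-type self-intersection point of the curve {P = 0}). -/

import Mathlib

open MvPolynomial

/-! `v` lies on two distinct lines `R_j = 0`, `R_k = 0` of the pencil, so the product `p` vanishes
to order two there, while no line `R_m` with `m > d ≥ k` passes through `v`. -/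

/-- The affine linear form `R_k(x,y,1) = (2d+1-k)x + ky - k(2d+1-k)` as a polynomial
in two variables. -/
noncomputable def R2 (d k : ℕ) : MvPolynomial (Fin 2) ℂ :=
  C (2*(d:ℂ)+1-(k:ℂ)) * X 0 + C (k:ℂ) * X 1 - C ((k:ℂ)*(2*(d:ℂ)+1-(k:ℂ)))

/-- `p(x,y) = P(x,y,1) = ∏_{k=0}^{d} R_k(x,y,1)`. -/
noncomputable def pPoly (d : ℕ) : MvPolynomial (Fin 2) ℂ :=
  ∏ k ∈ Finset.range (d+1), R2 d k

/-- `q(x,y) = Q(x,y,1) = ∏_{k=d+1}^{2d+1} R_k(x,y,1)`. -/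
noncomputable def qPoly (d : ℕ) : MvPolynomial (Fin 2) ℂ :=
  ∏ k ∈ Finset.Icc (d+1) (2*d+1), R2 d k

/-- The intersection point `( jk/(2d+1), (2d+1-j)(2d+1-k)/(2d+1) ) ∈ ℂ²` of the lines
`{R_j(x,y,1)=0}` and `{R_k(x,y,1)=0}`. -/
noncomputable def interPt (d j k : ℕ) : ℂ × ℂ :=
  ((j:ℂ)*(k:ℂ)/(2*(d:ℂ)+1),
   (2*(d:ℂ)+1-(j:ℂ))*(2*(d:ℂ)+1-(k:ℂ))/(2*(d:ℂ)+1))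

theorem MvPolynomial.eval_pderiv_prod_eq_zero {σ R ι : Type*} [CommRing R] {s : Finset ι}
    {F : ι → MvPolynomial σ R} {x : σ → R} {j k : ι} (hj : j ∈ s) (hk : k ∈ s) (hjk : j ≠ k)
    (hFj : eval x (F j) = 0) (hFk : eval x (F k) = 0) (i : σ) :
    eval x (pderiv i (∏ m ∈ s, F m)) = 0 := by
  classical
  rw [← Finset.mul_prod_erase s F hj,
    ← Finset.mul_prod_erase _ F (Finset.mem_erase.2 ⟨hjk.symm, hk⟩)]
  simp [hFj, hFk]

lemma eval_interPt_R2 (d j k m : ℕ) :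
    eval ![(interPt d j k).1, (interPt d j k).2] (R2 d m) = ((j : ℂ) - m) * ((k : ℂ) - m) := by
  have hN : 2 * (d : ℂ) + 1 ≠ 0 := by exact_mod_cast (Nat.succ_ne_zero (2 * d))
  simp only [R2, interPt, map_sub, map_add, map_mul, eval_C, eval_X,
    Matrix.cons_val_zero, Matrix.cons_val_one]
  field_simp
  ring

lemma eval_interPt_R2_eq_zero_iff (d j k m : ℕ) :
    eval ![(interPt d j k).1, (interPt d j k).2] (R2 d m) = 0 ↔ m = j ∨ m = k := by
  rw [eval_interPt_R2, mul_eq_zero, sub_eq_zero, sub_eq_zero, Nat.cast_inj, Nat.cast_inj,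
    eq_comm, eq_comm (a := k)]

theorem stmt14_general (d : ℕ) (j k : ℕ) (hjk : j < k) (hk : k ≤ d) :
    eval ![(interPt d j k).1, (interPt d j k).2] (pPoly d) = 0 ∧
    eval ![(interPt d j k).1, (interPt d j k).2] (pderiv 0 (pPoly d)) = 0 ∧
    eval ![(interPt d j k).1, (interPt d j k).2] (pderiv 1 (pPoly d)) = 0 ∧
    eval ![(interPt d j k).1, (interPt d j k).2] (qPoly d) ≠ 0 := by
  have hj_mem : j ∈ Finset.range (d + 1) := Finset.mem_range.2 (by omega)
  have hk_mem : k ∈ Finset.range (d + 1) := Finset.mem_range.2 (by omega)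
  have hRj := (eval_interPt_R2_eq_zero_iff d j k j).2 (Or.inl rfl)
  have hRk := (eval_interPt_R2_eq_zero_iff d j k k).2 (Or.inr rfl)
  refine ⟨?_, eval_pderiv_prod_eq_zero hj_mem hk_mem hjk.ne hRj hRk 0,
    eval_pderiv_prod_eq_zero hj_mem hk_mem hjk.ne hRj hRk 1, ?_⟩
  · rw [pPoly, map_prod]
    exact Finset.prod_eq_zero hj_mem hRj
  · rw [qPoly, map_prod, Finset.prod_ne_zero_iff]
    intro m hm
    rw [Ne, eval_interPt_R2_eq_zero_iff]
    simp only [Finset.mem_Icc] at hm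
    omega

/-- For `0 ≤ j < k ≤ d`, the intersection point `v` of the lines `{R_j(x,y,1)=0}` and
`{R_k(x,y,1)=0}` satisfies `p(v) = 0`, `∂p/∂x(v) = 0`, `∂p/∂y(v) = 0` and `q(v) ≠ 0`:
`v` is a critical point of `F = P/Q` with critical value `0` (a type 1 point). -/
theorem stmt14 (d : ℕ) (hd : 1 ≤ d) (j k : ℕ) (hjk : j < k) (hk : k ≤ d) :
    eval ![(interPt d j k).1, (interPt d j k).2] (pPoly d) = 0 ∧
    eval ![(interPt d j k).1, (interPt d j k).2] (pderiv 0 (pPoly d)) = 0 ∧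
    eval ![(interPt d j k).1, (interPt d j k).2] (pderiv 1 (pPoly d)) = 0 ∧
    eval ![(interPt d j k).1, (interPt d j k).2] (qPoly d) ≠ 0 :=
  stmt14_general d j k hjk hk
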